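/- Let (X_t) be a nonnegative sequence with X_{t+1} ≤ (1 - β_t(1-κ)) X_t + C β_t + ζ_t, where κ ∈ (0,1), β_t ∈ (0,1] with Σ β_t = ∞ and β_t → 0, C ≥ 0, and ζ_t ≥ 0 with ζ_t/β_t → 0. Then limsup_t X_t ≤ C/(1-κ). -/

import Mathlib

/-!
Fix `M > C / (1 - κ)`. Once `ζ_t ≤ ((1 - κ) M - C) β_t`, which holds eventually because
`ζ_t = o(β_t)`, the recursion contracts the excess over `M`:
`X_{t+1} - M ≤ (1 - β_t (1 - κ)) (X_t - M)`. The positive part of the excess is then bounded by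
`∏ (1 - β_s (1 - κ)) ≤ exp (-(1 - κ) ∑ β_s)`, which tends to `0` since `∑ β_s = ∞`.
Hence `limsup X ≤ M` for every such `M`.
-/

open Filter Finset Topology

theorem prod_one_sub_le_exp_neg_sum {ι : Type*} (s : Finset ι) {a : ι → ℝ}
    (ha : ∀ i ∈ s, a i ≤ 1) :
    ∏ i ∈ s, (1 - a i) ≤ Real.exp (-∑ i ∈ s, a i) := by
  rw [← sum_neg_distrib, Real.exp_sum]
  refine prod_le_prod (fun i hi => sub_nonneg.2 (ha i hi)) fun i _ => ?_
  linarith [Real.add_one_le_exp (-a i)]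

theorem le_prod_one_sub_mul_of_le_one_sub_mul {Y a : ℕ → ℝ} (ha : ∀ n, a n ≤ 1)
    (hrec : ∀ n, Y (n + 1) ≤ (1 - a n) * Y n) (n : ℕ) :
    Y n ≤ (∏ s ∈ range n, (1 - a s)) * Y 0 := by
  induction n with
  | zero => simp
  | succ n ih =>
    calc Y (n + 1) ≤ (1 - a n) * Y n := hrec n
      _ ≤ (1 - a n) * ((∏ s ∈ range n, (1 - a s)) * Y 0) :=
        mul_le_mul_of_nonneg_left ih (sub_nonneg.2 (ha n))
      _ = (∏ s ∈ range (n + 1), (1 - a s)) * Y 0 := by rw [prod_range_succ]; ring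

theorem tendsto_zero_of_le_one_sub_mul {Y a : ℕ → ℝ} (hY : ∀ n, 0 ≤ Y n)
    (ha : ∀ n, a n ≤ 1) (hsum : Tendsto (fun n => ∑ s ∈ range n, a s) atTop atTop)
    (hrec : ∀ n, Y (n + 1) ≤ (1 - a n) * Y n) :
    Tendsto Y atTop (𝓝 0) := by
  have hexp : Tendsto (fun n => Real.exp (-∑ s ∈ range n, a s) * Y 0) atTop (𝓝 0) := by
    simpa using (Real.tendsto_exp_atBot.comp (tendsto_neg_atTop_atBot.comp hsum)).mul_const (Y 0)
  refine tendsto_of_tendsto_of_tendsto_of_le_of_le tendsto_const_nhds hexp hY fun n => ?_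
  exact (le_prod_one_sub_mul_of_le_one_sub_mul ha hrec n).trans
    (mul_le_mul_of_nonneg_right (prod_one_sub_le_exp_neg_sum _ fun s _ => ha s) (hY 0))

theorem tendsto_zero_of_eventually_le_one_sub_mul {Y a : ℕ → ℝ} (hY : ∀ n, 0 ≤ Y n)
    (ha : ∀ n, a n ≤ 1) (hsum : Tendsto (fun n => ∑ s ∈ range n, a s) atTop atTop)
    (hrec : ∀ᶠ n in atTop, Y (n + 1) ≤ (1 - a n) * Y n) :
    Tendsto Y atTop (𝓝 0) := by
  obtain ⟨N, hN⟩ := eventually_atTop.1 hrec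
  have hsum_shift : Tendsto (fun n => ∑ s ∈ range n, a (s + N)) atTop atTop := by
    refine (tendsto_atTop_add_const_left atTop (-∑ s ∈ range N, a s)
      (hsum.comp (tendsto_add_atTop_nat N))).congr fun n => ?_
    rw [Function.comp_apply, add_comm n N, sum_range_add]
    simp only [neg_add_cancel_left, add_comm N]
  rw [← tendsto_add_atTop_iff_nat N]
  exact tendsto_zero_of_le_one_sub_mul (fun n => hY _) (fun n => ha _) hsum_shift
    fun n => by simpa only [add_right_comm] using hN (n + N) (Nat.le_add_left N n)

theorem posPart_le_mul_posPart {x y c : ℝ} (hc : 0 ≤ c) (h : x ≤ c * y) : x⁺ ≤ c * y⁺ := by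
  rw [posPart_def]
  exact sup_le (h.trans (mul_le_mul_of_nonneg_left (le_posPart y) hc))
    (mul_nonneg hc (posPart_nonneg y))

theorem limsup_le_of_tendsto_posPart_sub {α : Type*} {l : Filter α} [l.NeBot] {X : α → ℝ} {M : ℝ}
    (hX : IsCoboundedUnder (· ≤ ·) l X) (h : Tendsto (fun t => (X t - M)⁺) l (𝓝 0)) :
    limsup X l ≤ M := by
  have hlim : Tendsto (fun t => M + (X t - M)⁺) l (𝓝 M) := by
    simpa using tendsto_const_nhds.add h
  calc limsup X l ≤ limsup (fun t => M + (X t - M)⁺) l :=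
        limsup_le_limsup (Eventually.of_forall fun t => by linarith [le_posPart (X t - M)])
          hX hlim.isBoundedUnder_le
    _ = M := hlim.limsup_eq

theorem stmt16_general (κ C : ℝ) (hκ0 : 0 < κ) (hκ1 : κ < 1)
    (X β ζ : ℕ → ℝ)
    (hX0 : ∀ t, 0 ≤ X t)
    (hβ : ∀ t, 0 < β t ∧ β t ≤ 1)
    (hβdiv : Filter.Tendsto (fun n => ∑ s ∈ Finset.range n, β s) Filter.atTop Filter.atTop)
    (hζ : Filter.Tendsto (fun t => ζ t / β t) Filter.atTop (nhds 0))
    (hrec : ∀ t, X (t + 1) ≤ (1 - β t * (1 - κ)) * X t + C * β t + ζ t) :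
    Filter.limsup X Filter.atTop ≤ C / (1 - κ) := by
  have hκ : 0 < 1 - κ := sub_pos.2 hκ1
  have hX : IsCoboundedUnder (· ≤ ·) atTop X :=
    (isBoundedUnder_of ⟨0, hX0⟩).isCoboundedUnder_le
  refine le_of_forall_gt_imp_ge_of_dense fun M hM => limsup_le_of_tendsto_posPart_sub hX ?_
  have hdrift : 0 < (1 - κ) * M - C := by rw [div_lt_iff₀ hκ] at hM; linarith
  have hstep : ∀ t, 0 ≤ 1 - β t * (1 - κ) := fun t => by nlinarith [hβ t]
  refine tendsto_zero_of_eventually_le_one_sub_mul (a := fun t => β t * (1 - κ))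
    (fun t => posPart_nonneg _) (fun t => by linarith [hstep t])
    (by simpa [← sum_mul] using hβdiv.atTop_mul_const hκ) ?_
  filter_upwards [hζ.eventually (gt_mem_nhds hdrift)] with t hζt
  rw [div_lt_iff₀ (hβ t).1] at hζt
  exact posPart_le_mul_posPart (hstep t) (by linarith [hrec t])

/-- Stochastic-approximation tracking recursion: if `X_{t+1} ≤ (1 - β_t(1-κ)) X_t + C β_t + ζ_t`
with `κ ∈ (0,1)`, stepsizes `β_t ∈ (0,1]` satisfying `∑ β_t = ∞` and `β_t → 0`, `C ≥ 0`,
and perturbations `ζ_t ≥ 0` with `ζ_t / β_t → 0`, then `limsup_t X_t ≤ C / (1 - κ)`. -/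
theorem stmt16 (κ C : ℝ) (hκ0 : 0 < κ) (hκ1 : κ < 1) (hC : 0 ≤ C)
    (X β ζ : ℕ → ℝ)
    (hX0 : ∀ t, 0 ≤ X t)
    (hβ : ∀ t, 0 < β t ∧ β t ≤ 1)
    (hβdiv : Filter.Tendsto (fun n => ∑ s ∈ Finset.range n, β s) Filter.atTop Filter.atTop)
    (hβ0 : Filter.Tendsto β Filter.atTop (nhds 0))
    (hζ0 : ∀ t, 0 ≤ ζ t)
    (hζ : Filter.Tendsto (fun t => ζ t / β t) Filter.atTop (nhds 0))
    (hrec : ∀ t, X (t + 1) ≤ (1 - β t * (1 - κ)) * X t + C * β t + ζ t) :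
    Filter.limsup X Filter.atTop ≤ C / (1 - κ) :=
  stmt16_general κ C hκ0 hκ1 X β ζ hX0 hβ hβdiv hζ hrec
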